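/- arXiv:1408.6732 — 3 statements merged into one kernel-verified Lean document; each statement's English description precedes it below -/
import Mathlib

section
/- In Cl(9), let c = (α₊X⁺ + α₋X⁻)Γ₁₂₃ and d = (α′₊X⁺ + α′₋X⁻)Γ₁₂₃, where X^± = (1 ± Γ₁₂₄₅)/2, and let q(Γᵢ) = c²Γᵢ + Γᵢd² − 2cΓᵢd. Then q(Γ₃) = (α₊ − α′₊)² Γ₃ X⁺ + (α₋ − α′₋)² Γ₃ X⁻. -/
/-- In Cl(9) (generators `Γ 0,…,Γ 8` for Γ₁,…,Γ₉), with
c = (α₊X⁺ + α₋X⁻)Γ₁₂₃, d = (α′₊X⁺ + α′₋X⁻)Γ₁₂₃, X^± = (1 ± Γ₁₂₄₅)/2 and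
q(Γᵢ) = c²Γᵢ + Γᵢd² − 2cΓᵢd, one has (Γ₃ has index 2)
q(Γ₃) = (α₊ − α′₊)²Γ₃X⁺ + (α₋ − α′₋)²Γ₃X⁻. -/
theorem stmt_7 (Cl : Type*) [Ring Cl] [Algebra ℝ Cl] (Γ : Fin 9 → Cl)
    (hΓ : ∀ i j : Fin 9, Γ i * Γ j + Γ j * Γ i = if i = j then (-2 : Cl) else 0)
    (αp αm αp' αm' : ℝ) (Xp Xm c d : Cl)
    (hXp : Xp = (2 : ℝ)⁻¹ • (1 + Γ 0 * Γ 1 * Γ 3 * Γ 4))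
    (hXm : Xm = (2 : ℝ)⁻¹ • (1 - Γ 0 * Γ 1 * Γ 3 * Γ 4))
    (hc : c = (αp • Xp + αm • Xm) * (Γ 0 * Γ 1 * Γ 2))
    (hd : d = (αp' • Xp + αm' • Xm) * (Γ 0 * Γ 1 * Γ 2))
    (q : Cl → Cl) (hq : ∀ v : Cl, q v = c ^ 2 * v + v * d ^ 2 - 2 * (c * v * d)) :
    q (Γ 2) = (αp - αp') ^ 2 • (Γ 2 * Xp) + (αm - αm') ^ 2 • (Γ 2 * Xm) := by
  have key : ∀ x y : Cl, x + x = y + y → x = y := by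
    intro x y h
    have h2 : (2:ℝ) • x = (2:ℝ) • y := by rw [two_smul, two_smul]; exact h
    calc x = (2⁻¹:ℝ) • ((2:ℝ) • x) := by rw [smul_smul]; norm_num
      _ = (2⁻¹:ℝ) • ((2:ℝ) • y) := by rw [h2]
      _ = y := by rw [smul_smul]; norm_num
  have hsq : ∀ i : Fin 9, Γ i * Γ i = -1 := by
    intro i
    have h := hΓ i i
    simp only [if_pos rfl] at h
    apply key
    rw [h]; norm_num
  have hsq' : ∀ i : Fin 9, ∀ x : Cl, Γ i * (Γ i * x) = -x := by
    intro i x; rw [← mul_assoc, hsq, neg_one_mul]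
  have hsw : ∀ i j : Fin 9, i ≠ j → Γ j * Γ i = -(Γ i * Γ j) := by
    intro i j h
    have h' := hΓ i j
    simp only [if_neg h] at h'
    exact eq_neg_of_add_eq_zero_right h'
  have hsw' : ∀ i j : Fin 9, i ≠ j → ∀ x : Cl, Γ j * (Γ i * x) = -(Γ i * (Γ j * x)) := by
    intro i j h x
    rw [← mul_assoc, hsw i j h, neg_mul, mul_assoc]
  -- instantiate for pairs among 0..4
  have s10 := hsw' 0 1 (by decide); have t10 := hsw 0 1 (by decide)
  have s20 := hsw' 0 2 (by decide); have t20 := hsw 0 2 (by decide)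
  have s30 := hsw' 0 3 (by decide); have t30 := hsw 0 3 (by decide)
  have s40 := hsw' 0 4 (by decide); have t40 := hsw 0 4 (by decide)
  have s21 := hsw' 1 2 (by decide); have t21 := hsw 1 2 (by decide)
  have s31 := hsw' 1 3 (by decide); have t31 := hsw 1 3 (by decide)
  have s41 := hsw' 1 4 (by decide); have t41 := hsw 1 4 (by decide)
  have s32 := hsw' 2 3 (by decide); have t32 := hsw 2 3 (by decide)
  have s42 := hsw' 2 4 (by decide); have t42 := hsw 2 4 (by decide)
  have s43 := hsw' 3 4 (by decide); have t43 := hsw 3 4 (by decide)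
  subst hXp hXm hc hd
  rw [hq]
  simp only [pow_two, two_mul]
  simp only [mul_add, add_mul, mul_sub, sub_mul, mul_neg, neg_mul, mul_assoc,
    smul_mul_assoc, mul_smul_comm, smul_smul, smul_add, smul_sub, smul_neg,
    one_mul, mul_one, s10, s20, s30, s40, s21, s31, s41, s32, s42, s43,
    t10, t20, t30, t40, t21, t31, t41, t32, t42, t43, hsq, hsq',
    neg_neg, neg_add, neg_sub, sub_neg_eq_add]
  module
end

section
/- In Cl(9), with c = (α₊X⁺ + α₋X⁻)Γ₁₂₃, d = (α′₊X⁺ + α′₋X⁻)Γ₁₂₃, X^± = (1 ± Γ₁₂₄₅)/2, and q(Γᵢ) = c²Γᵢ + Γᵢd² − 2cΓᵢd: for i ∈ {1,2} one has q(Γᵢ) = (α₋ − α′₊)² Γᵢ X⁺ + (α₊ − α′₋)² Γᵢ X⁻, and for i ∈ {6,7,8,9} one has q(Γᵢ) = (α₊ + α′₊)² Γᵢ X⁺ + (α₋ + α′₋)² Γᵢ X⁻. -/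
private lemma masterA (Cl : Type*) [Ring Cl] [Algebra ℝ Cl] (x t v : Cl)
    (αp αm αp' αm' : ℝ) (Xp Xm c d : Cl)
    (hx2 : x * x = 1) (ht2 : t * t = 1) (htx : t * x = x * t)
    (hvx : v * x = -(x * v)) (hvt : v * t = t * v)
    (hXp : Xp = (2 : ℝ)⁻¹ • (1 + x)) (hXm : Xm = (2 : ℝ)⁻¹ • (1 - x))
    (hc : c = (αp • Xp + αm • Xm) * t) (hd : d = (αp' • Xp + αm' • Xm) * t) :
    c ^ 2 * v + v * d ^ 2 - 2 * (c * v * d)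
      = (αm - αp') ^ 2 • (v * Xp) + (αp - αm') ^ 2 • (v * Xm) := by
  have htx' : ∀ y : Cl, t * (x * y) = x * (t * y) := fun y => by
    rw [← mul_assoc, htx, mul_assoc]
  have hvx' : ∀ y : Cl, v * (x * y) = -(x * (v * y)) := fun y => by
    rw [← mul_assoc, hvx, neg_mul, mul_assoc]
  have hvt' : ∀ y : Cl, v * (t * y) = t * (v * y) := fun y => by
    rw [← mul_assoc, hvt, mul_assoc]
  have hx2' : ∀ y : Cl, x * (x * y) = y := fun y => by rw [← mul_assoc, hx2, one_mul]
  have ht2' : ∀ y : Cl, t * (t * y) = y := fun y => by rw [← mul_assoc, ht2, one_mul]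
  subst hXp hXm hc hd
  simp only [pow_two, smul_add, smul_sub, smul_smul, add_mul, mul_add, sub_mul, mul_sub,
    smul_mul_assoc, mul_smul_comm, mul_one, one_mul, mul_assoc, neg_mul, mul_neg,
    smul_neg, neg_neg, two_mul, htx, htx', hvx, hvx', hvt, hvt', hx2, hx2', ht2, ht2']
  match_scalars <;> ring

private lemma masterB (Cl : Type*) [Ring Cl] [Algebra ℝ Cl] (x t v : Cl)
    (αp αm αp' αm' : ℝ) (Xp Xm c d : Cl)
    (hx2 : x * x = 1) (ht2 : t * t = 1) (htx : t * x = x * t)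
    (hvx : v * x = x * v) (hvt : v * t = -(t * v))
    (hXp : Xp = (2 : ℝ)⁻¹ • (1 + x)) (hXm : Xm = (2 : ℝ)⁻¹ • (1 - x))
    (hc : c = (αp • Xp + αm • Xm) * t) (hd : d = (αp' • Xp + αm' • Xm) * t) :
    c ^ 2 * v + v * d ^ 2 - 2 * (c * v * d)
      = (αp + αp') ^ 2 • (v * Xp) + (αm + αm') ^ 2 • (v * Xm) := by
  have htx' : ∀ y : Cl, t * (x * y) = x * (t * y) := fun y => by
    rw [← mul_assoc, htx, mul_assoc]
  have hvx' : ∀ y : Cl, v * (x * y) = x * (v * y) := fun y => by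
    rw [← mul_assoc, hvx, mul_assoc]
  have hvt' : ∀ y : Cl, v * (t * y) = -(t * (v * y)) := fun y => by
    rw [← mul_assoc, hvt, neg_mul, mul_assoc]
  have hx2' : ∀ y : Cl, x * (x * y) = y := fun y => by rw [← mul_assoc, hx2, one_mul]
  have ht2' : ∀ y : Cl, t * (t * y) = y := fun y => by rw [← mul_assoc, ht2, one_mul]
  subst hXp hXm hc hd
  simp only [pow_two, smul_add, smul_sub, smul_smul, add_mul, mul_add, sub_mul, mul_sub,
    smul_mul_assoc, mul_smul_comm, mul_one, one_mul, mul_assoc, neg_mul, mul_neg,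
    smul_neg, neg_neg, two_mul, htx, htx', hvx, hvx', hvt, hvt', hx2, hx2', ht2, ht2']
  match_scalars <;> ring

/-- In Cl(9) (generators `Γ 0,…,Γ 8` for Γ₁,…,Γ₉), with
c = (α₊X⁺ + α₋X⁻)Γ₁₂₃, d = (α′₊X⁺ + α′₋X⁻)Γ₁₂₃, X^± = (1 ± Γ₁₂₄₅)/2 and
q(Γᵢ) = c²Γᵢ + Γᵢd² − 2cΓᵢd:
for i ∈ {1,2} (indices 0,1), q(Γᵢ) = (α₋−α′₊)²ΓᵢX⁺ + (α₊−α′₋)²ΓᵢX⁻, and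
for i ∈ {6,7,8,9} (indices 5,6,7,8), q(Γᵢ) = (α₊+α′₊)²ΓᵢX⁺ + (α₋+α′₋)²ΓᵢX⁻. -/
theorem stmt_8 (Cl : Type*) [Ring Cl] [Algebra ℝ Cl] (Γ : Fin 9 → Cl)
    (hΓ : ∀ i j : Fin 9, Γ i * Γ j + Γ j * Γ i = if i = j then (-2 : Cl) else 0)
    (αp αm αp' αm' : ℝ) (Xp Xm c d : Cl)
    (hXp : Xp = (2 : ℝ)⁻¹ • (1 + Γ 0 * Γ 1 * Γ 3 * Γ 4))
    (hXm : Xm = (2 : ℝ)⁻¹ • (1 - Γ 0 * Γ 1 * Γ 3 * Γ 4))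
    (hc : c = (αp • Xp + αm • Xm) * (Γ 0 * Γ 1 * Γ 2))
    (hd : d = (αp' • Xp + αm' • Xm) * (Γ 0 * Γ 1 * Γ 2))
    (q : Cl → Cl) (hq : ∀ v : Cl, q v = c ^ 2 * v + v * d ^ 2 - 2 * (c * v * d)) :
    (∀ i : Fin 9, i ∈ ({0, 1} : Set (Fin 9)) →
      q (Γ i) = (αm - αp') ^ 2 • (Γ i * Xp) + (αp - αm') ^ 2 • (Γ i * Xm)) ∧
    (∀ i : Fin 9, i ∈ ({5, 6, 7, 8} : Set (Fin 9)) →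
      q (Γ i) = (αp + αp') ^ 2 • (Γ i * Xp) + (αm + αm') ^ 2 • (Γ i * Xm)) := by
  have hsq : ∀ j : Fin 9, Γ j * Γ j = -1 := by
    intro j
    have h := hΓ j j
    rw [if_pos rfl] at h
    have h2 : (2 : ℝ) • (Γ j * Γ j) = (2 : ℝ) • (-1 : Cl) := by
      rw [two_smul, two_smul, h]
      norm_num
    have := congrArg (fun z : Cl => (2 : ℝ)⁻¹ • z) h2
    simpa [smul_smul] using this
  have hswap : ∀ i j : Fin 9, i ≠ j → Γ j * Γ i = -(Γ i * Γ j) := by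
    intro i j hij
    have h := hΓ i j
    rw [if_neg hij] at h
    exact eq_neg_of_add_eq_zero_right h
  have hswap' : ∀ i j : Fin 9, i ≠ j → ∀ y : Cl, Γ j * (Γ i * y) = -(Γ i * (Γ j * y)) := by
    intro i j hij y
    rw [← mul_assoc, hswap i j hij, neg_mul, mul_assoc]
  have hsq' : ∀ (j : Fin 9) (y : Cl), Γ j * (Γ j * y) = -y := by
    intro j y
    rw [← mul_assoc, hsq, neg_one_mul]
  have hx2 : (Γ 0 * Γ 1 * Γ 3 * Γ 4) * (Γ 0 * Γ 1 * Γ 3 * Γ 4) = 1 := by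
    simp only [mul_assoc, mul_neg, neg_mul, neg_neg, mul_one, one_mul,
      hswap' 0 1 (by decide), hswap' 0 3 (by decide), hswap' 0 4 (by decide),
      hswap' 1 3 (by decide), hswap' 1 4 (by decide), hswap' 3 4 (by decide),
      hswap 0 1 (by decide), hswap 0 3 (by decide), hswap 0 4 (by decide),
      hswap 1 3 (by decide), hswap 1 4 (by decide), hswap 3 4 (by decide),
      hsq, hsq']
  have ht2 : (Γ 0 * Γ 1 * Γ 2) * (Γ 0 * Γ 1 * Γ 2) = 1 := by
    simp only [mul_assoc, mul_neg, neg_mul, neg_neg, mul_one, one_mul,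
      hswap' 0 1 (by decide), hswap' 0 2 (by decide), hswap' 1 2 (by decide),
      hswap 0 1 (by decide), hswap 0 2 (by decide), hswap 1 2 (by decide),
      hsq, hsq']
  have htx : (Γ 0 * Γ 1 * Γ 2) * (Γ 0 * Γ 1 * Γ 3 * Γ 4) =
      (Γ 0 * Γ 1 * Γ 3 * Γ 4) * (Γ 0 * Γ 1 * Γ 2) := by
    simp only [mul_assoc, mul_neg, neg_mul, neg_neg, mul_one, one_mul,
      hswap' 0 1 (by decide), hswap' 0 2 (by decide), hswap' 0 3 (by decide),
      hswap' 0 4 (by decide), hswap' 1 2 (by decide), hswap' 1 3 (by decide),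
      hswap' 1 4 (by decide), hswap' 2 3 (by decide), hswap' 2 4 (by decide),
      hswap' 3 4 (by decide),
      hswap 0 1 (by decide), hswap 0 2 (by decide), hswap 0 3 (by decide),
      hswap 0 4 (by decide), hswap 1 2 (by decide), hswap 1 3 (by decide),
      hswap 1 4 (by decide), hswap 2 3 (by decide), hswap 2 4 (by decide),
      hswap 3 4 (by decide),
      hsq, hsq']
  constructor
  · intro i hi
    rw [hq]
    simp only [Set.mem_insert_iff, Set.mem_singleton_iff] at hi
    rcases hi with rfl | rfl
    · exact masterA Cl _ _ _ αp αm αp' αm' Xp Xm c d hx2 ht2 htx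
        (by simp only [mul_assoc, mul_neg, neg_mul, neg_neg, mul_one, one_mul,
              hswap' 0 1 (by decide), hswap' 0 3 (by decide), hswap' 0 4 (by decide),
              hswap' 1 3 (by decide), hswap' 1 4 (by decide), hswap' 3 4 (by decide),
              hswap 0 1 (by decide), hswap 0 3 (by decide), hswap 0 4 (by decide),
              hswap 1 3 (by decide), hswap 1 4 (by decide), hswap 3 4 (by decide),
              hsq, hsq'])
        (by simp only [mul_assoc, mul_neg, neg_mul, neg_neg, mul_one, one_mul,
              hswap' 0 1 (by decide), hswap' 0 2 (by decide), hswap' 1 2 (by decide),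
              hswap 0 1 (by decide), hswap 0 2 (by decide), hswap 1 2 (by decide),
              hsq, hsq'])
        hXp hXm hc hd
    · exact masterA Cl _ _ _ αp αm αp' αm' Xp Xm c d hx2 ht2 htx
        (by simp only [mul_assoc, mul_neg, neg_mul, neg_neg, mul_one, one_mul,
              hswap' 0 1 (by decide), hswap' 0 3 (by decide), hswap' 0 4 (by decide),
              hswap' 1 3 (by decide), hswap' 1 4 (by decide), hswap' 3 4 (by decide),
              hswap 0 1 (by decide), hswap 0 3 (by decide), hswap 0 4 (by decide),
              hswap 1 3 (by decide), hswap 1 4 (by decide), hswap 3 4 (by decide),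
              hsq, hsq'])
        (by simp only [mul_assoc, mul_neg, neg_mul, neg_neg, mul_one, one_mul,
              hswap' 0 1 (by decide), hswap' 0 2 (by decide), hswap' 1 2 (by decide),
              hswap 0 1 (by decide), hswap 0 2 (by decide), hswap 1 2 (by decide),
              hsq, hsq'])
        hXp hXm hc hd
  · have genB : ∀ i : Fin 9, (0 : Fin 9) ≠ i → (1 : Fin 9) ≠ i → (2 : Fin 9) ≠ i →
        (3 : Fin 9) ≠ i → (4 : Fin 9) ≠ i →
        q (Γ i) = (αp + αp') ^ 2 • (Γ i * Xp) + (αm + αm') ^ 2 • (Γ i * Xm) := by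
      intro i h0 h1 h2 h3 h4
      rw [hq]
      exact masterB Cl _ _ _ αp αm αp' αm' Xp Xm c d hx2 ht2 htx
        (by simp only [mul_assoc, mul_neg, neg_mul, neg_neg, mul_one, one_mul,
              hswap' 0 i h0, hswap' 1 i h1, hswap' 3 i h3, hswap' 4 i h4,
              hswap 0 i h0, hswap 1 i h1, hswap 3 i h3, hswap 4 i h4,
              hswap' 0 1 (by decide), hswap' 0 3 (by decide), hswap' 0 4 (by decide),
              hswap' 1 3 (by decide), hswap' 1 4 (by decide), hswap' 3 4 (by decide),
              hswap 0 1 (by decide), hswap 0 3 (by decide), hswap 0 4 (by decide),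
              hswap 1 3 (by decide), hswap 1 4 (by decide), hswap 3 4 (by decide),
              hsq, hsq'])
        (by simp only [mul_assoc, mul_neg, neg_mul, neg_neg, mul_one, one_mul,
              hswap' 0 i h0, hswap' 1 i h1, hswap' 2 i h2,
              hswap 0 i h0, hswap 1 i h1, hswap 2 i h2,
              hswap' 0 1 (by decide), hswap' 0 2 (by decide), hswap' 1 2 (by decide),
              hswap 0 1 (by decide), hswap 0 2 (by decide), hswap 1 2 (by decide),
              hsq, hsq'])
        hXp hXm hc hd
    intro i hi
    simp only [Set.mem_insert_iff, Set.mem_singleton_iff] at hi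
    rcases hi with rfl | rfl | rfl | rfl <;>
      exact genB _ (by decide) (by decide) (by decide) (by decide) (by decide)
end

section
/- Let V be a finite-dimensional real inner product space, B : V → V a symmetric linear map, and let g = V* ⊕ ℝe₊ ⊕ ℝe₋ ⊕ V with the bilinear bracket determined by [v*, e₋] = Bv, [v*, w] = −⟨Bv, w⟩ e₊, [e₋, w] = w* for v, w ∈ V (all other brackets among basis elements zero, and the bracket antisymmetric). Then this bracket satisfies the Jacobi identity, so g is a Lie algebra. -/
open scoped RealInnerProductSpace

/-- The transvection algebra of a Cahen–Wallach space: an element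
`(u, a, b, w) : V × ℝ × ℝ × V` stands for `u* + a·e₊ + b·e₋ + w`, and the
bracket is determined by `[v*, e₋] = Bv`, `[v*, w] = −⟨Bv, w⟩e₊`,
`[e₋, w] = w*`. -/
def cwBracket {V : Type*} [NormedAddCommGroup V] [InnerProductSpace ℝ V]
    (B : V →ₗ[ℝ] V) (x y : V × ℝ × ℝ × V) : V × ℝ × ℝ × V :=
  (x.2.2.1 • y.2.2.2 - y.2.2.1 • x.2.2.2,
   ⟪B y.1, x.2.2.2⟫ - ⟪B x.1, y.2.2.2⟫,
   0,
   y.2.2.1 • B x.1 - x.2.2.1 • B y.1)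

/-- The Cahen–Wallach bracket is antisymmetric and satisfies the Jacobi
identity, so it makes `V* ⊕ ℝe₊ ⊕ ℝe₋ ⊕ V` a Lie algebra. -/
theorem stmt_9 {V : Type*} [NormedAddCommGroup V] [InnerProductSpace ℝ V]
    [FiniteDimensional ℝ V] (B : V →ₗ[ℝ] V)
    (hB : ∀ v w : V, ⟪B v, w⟫ = ⟪v, B w⟫) :
    (∀ x y : V × ℝ × ℝ × V, cwBracket B x y = -cwBracket B y x) ∧
    (∀ x y z : V × ℝ × ℝ × V,
      cwBracket B x (cwBracket B y z) + cwBracket B y (cwBracket B z x) +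
        cwBracket B z (cwBracket B x y) = 0) := by
  constructor
  · intro x y
    simp only [cwBracket, Prod.neg_mk, Prod.mk.injEq]
    constructor
    · abel
    constructor
    · ring
    constructor
    · ring
    · abel
  · intro x y z
    simp only [cwBracket, Prod.mk_add_mk, Prod.mk.injEq, Prod.mk_eq_zero,
      map_sub, map_smul, inner_sub_left, inner_sub_right, inner_smul_left,
      inner_smul_right, smul_sub, smul_smul, RCLike.ofReal_real_eq_id, id_eq]
    have h2 : ∀ a b : V, ⟪a, B b⟫ = ⟪b, B a⟫ := fun a b => by
      rw [← hB, real_inner_comm]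
    have h3 : ∀ a b : V, ⟪a, B (B b)⟫ = ⟪b, B (B a)⟫ := fun a b => by
      rw [← hB, real_inner_comm, hB]
    refine ⟨by module, ?_, by ring, by module⟩
    simp only [starRingEnd_apply, star_trivial, hB]
    linear_combination y.2.2.1 * (h2 z.2.2.2 x.2.2.2 + h3 x.1 z.1)
      + z.2.2.1 * (h2 x.2.2.2 y.2.2.2 + h3 y.1 x.1)
      + x.2.2.1 * (h2 y.2.2.2 z.2.2.2 + h3 z.1 y.1)
end
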